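/- Let P₋ and P₊ be disjoint spacelike totally geodesic planes in three-dimensional Anti-de Sitter space, let x be a point with timelike geodesic segments l₁ and l₂ from x orthogonal to P₋ and P₊, of lengths w₁ and w₂ respectively with w₁ ≤ w₂ and endpoints p ∈ P₋ and q ∈ P₊. Let p′ ∈ P₋ be a point at hyperbolic distance R′ from p in P₋, and let d be the timelike distance from the point (π|_{P₊})^{−1}(p′) to P₋, where π: P₊ → P₋ is the orthogonal projection. Then tan(d) ≤ (1+√2) · cosh(R′) · tan(w₁ + w₂). -/
import Mathlib


/-!
Common framework for formalizing "Maximal surfaces in Anti-de Sitter space, width of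
convex hulls and quasiconformal extensions of quasisymmetric homeomorphisms" (A. Seppi).

Anti-de Sitter space is modeled projectively: `qform` is the bilinear form of
signature (2,2) on ℝ⁴, `AdS3` is the projectivization of its negative cone,
and spacelike surfaces are recorded through (lifts of) smooth spacelike embeddings
of ℝ² into the quadric {⟨x,x⟩ = -1} (the double cover of AdS³), together with a
future-directed unit normal field and the associated shape operator.
-/

noncomputable section

open Real Set Filter Topology

namespace AdSPaper

/-- The bilinear form of signature `(2,2)` on `ℝ⁴`. -/
def qform (x y : Fin 4 → ℝ) : ℝ :=
  x 0 * y 0 + x 1 * y 1 - x 2 * y 2 - x 3 * y 3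

/-- Quotient topology on a projectivization. -/
instance (K V : Type*) [DivisionRing K] [AddCommGroup V] [Module K V] [TopologicalSpace V] :
    TopologicalSpace (Projectivization K V) := by
  unfold Projectivization
  infer_instance

/-- Real projective 3-space. -/
abbrev RP3 := Projectivization ℝ (Fin 4 → ℝ)

/-- The real projective line. -/
abbrev RP1 := Projectivization ℝ (Fin 2 → ℝ)

/-- The point of `ℝP³` determined by a nonzero vector of `ℝ⁴`. -/
def projPt (x : Fin 4 → ℝ) (hx : x ≠ 0) : RP3 := Projectivization.mk ℝ x hx

/-- Anti-de Sitter space: the projectivization of the negative cone of `qform`.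
(The sign of `qform x x` does not depend on the chosen representative.) -/
def AdS3 : Set RP3 := {P | qform P.rep P.rep < 0}

/-- The boundary at infinity of Anti-de Sitter space: the projectivization of the null cone. -/
def bdryAdS3 : Set RP3 := {P | qform P.rep P.rep = 0}

/-- The nonzero lifts of a subset of `ℝP³`. -/
def lifts (Γ : Set RP3) : Set (Fin 4 → ℝ) :=
  {x | ∃ hx : x ≠ 0, projPt x hx ∈ Γ}

/-- The (projective) convex hull of a set `Γ ⊆ ℝP³` contained in an affine chart:
the image of the convex hull of a coherent family of lifts of `Γ`, chosen on the positive
side of a linear hyperplane avoiding all lifts of `Γ` (i.e. an affine chart containing `Γ`). -/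
def projConvexHull (Γ : Set RP3) : Set RP3 :=
  {P | ∃ L : (Fin 4 → ℝ) →ₗ[ℝ] ℝ, (∀ x ∈ lifts Γ, L x ≠ 0) ∧
      ∃ (y : Fin 4 → ℝ) (hy : y ≠ 0), projPt y hy = P ∧
        y ∈ convexHull ℝ {x | x ∈ lifts Γ ∧ 0 < L x}}

/-- The width of (the convex hull of) a set `Γ ⊆ ℝP³`: the supremum of the lengths of
timelike geodesic segments `t ↦ [cos t • a + sin t • b]` contained in the convex hull of `Γ`. -/
def width (Γ : Set RP3) : ℝ :=
  sSup {T : ℝ | 0 ≤ T ∧ T < π ∧ ∃ a b : Fin 4 → ℝ,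
      qform a a = -1 ∧ qform b b = -1 ∧ qform a b = 0 ∧
      ∀ t ∈ Icc (0 : ℝ) T, ∃ h : (Real.cos t • a + Real.sin t • b) ≠ 0,
        projPt (Real.cos t • a + Real.sin t • b) h ∈ projConvexHull Γ}

/-- Inverse hyperbolic cosine. -/
def arcosh (x : ℝ) : ℝ := Real.log (x + Real.sqrt (x ^ 2 - 1))

/-! ### The projective line, cross-ratios and quasisymmetric homeomorphisms -/

/-- Determinant of a pair of vectors of ℝ². -/
def det2 (v w : Fin 2 → ℝ) : ℝ := v 0 * w 1 - v 1 * w 0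

/-- The cross-ratio of a quadruple of points of `ℝP¹`, with the convention
`cr(z₁,z₂,z₃,z₄) = (z₄−z₁)(z₃−z₂)/((z₂−z₁)(z₃−z₄))`.  (The expression below is
invariant under rescaling of each of the four representatives.) -/
def crossRatio (z₁ z₂ z₃ z₄ : RP1) : ℝ :=
  (det2 z₄.rep z₁.rep * det2 z₃.rep z₂.rep) / (det2 z₂.rep z₁.rep * det2 z₃.rep z₄.rep)

/-- The cyclic orientation invariant of a triple of points of `ℝP¹`
(for finite points `a,b,c` it equals `(a−b)(b−c)(c−a)` and its sign is scale invariant). -/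
def tripleOrient (a b c : RP1) : ℝ :=
  det2 a.rep b.rep * det2 b.rep c.rep * det2 c.rep a.rep

/-- A map of `ℝP¹` is orientation-preserving if it preserves the cyclic orientation
of triples of points. -/
def OrientationPreserving (φ : RP1 → RP1) : Prop :=
  ∀ a b c : RP1, 0 < tripleOrient a b c → 0 < tripleOrient (φ a) (φ b) (φ c)

/-- The set of cross-ratio distortions `|ln |cr(φ(Q))||` of symmetric quadruples
(`cr(Q) = -1`) under the map `φ`. -/
def crSet (φ : RP1 → RP1) : Set ℝ :=
  {r | ∃ z₁ z₂ z₃ z₄ : RP1, crossRatio z₁ z₂ z₃ z₄ = -1 ∧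
      r = |Real.log (abs (crossRatio (φ z₁) (φ z₂) (φ z₃) (φ z₄)))|}

/-- The cross-ratio norm `‖φ‖_cr` of a circle map `φ`. -/
def crNorm (φ : RP1 → RP1) : ℝ := sSup (crSet φ)

/-- A quasisymmetric homeomorphism of `ℝP¹`: an orientation-preserving homeomorphism
with finite cross-ratio norm. -/
def Quasisymmetric (φ : RP1 ≃ₜ RP1) : Prop :=
  OrientationPreserving ⇑φ ∧ BddAbove (crSet ⇑φ)

/-- The null vector of ℝ^{2,2} corresponding to the pair of lines `([v],[w]) ∈ ℝP¹ × ℝP¹`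
under the standard identification of `∂∞AdS³` with `ℝP¹ × ℝP¹` (via the rank-one
2×2 matrix `v wᵀ`, identifying ℝ^{2,2} with 2×2 matrices with minus the determinant). -/
def toBoundary (v w : Fin 2 → ℝ) : Fin 4 → ℝ :=
  ![(v 0 * w 0 - v 1 * w 1) / 2, (v 0 * w 1 + v 1 * w 0) / 2,
    (v 0 * w 0 + v 1 * w 1) / 2, (v 0 * w 1 - v 1 * w 0) / 2]

/-- The graph `gr(φ)` of a map `φ : ℝP¹ → ℝP¹`, as a curve in `∂∞AdS³ ⊆ ℝP³`. -/
def grGraph (φ : RP1 → RP1) : Set RP3 :=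
  {P | ∃ (v w : Fin 2 → ℝ) (hv : v ≠ 0) (hw : w ≠ 0) (hx : toBoundary v w ≠ 0),
      projPt (toBoundary v w) hx = P ∧
      φ (Projectivization.mk ℝ v hv) = Projectivization.mk ℝ w hw}

/-! ### Spacelike and maximal surfaces in AdS³ -/

/-- The global timelike vector field `x ↦ (0,0,−x₄,x₃)` on the quadric, fixing the
time orientation of AdS³. -/
def timeVec (x : Fin 4 → ℝ) : Fin 4 → ℝ := ![0, 0, -(x 3), x 2]

/-- A (lifted, parametrized) smooth spacelike embedded disc in AdS³: a smooth embedding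
of ℝ² into the quadric `{⟨x,x⟩ = −1} ⊆ ℝ^{2,2}` (the double cover of AdS³), with spacelike
first fundamental form, together with its future-directed unit normal field and
the associated shape operator `B = ∇N`. -/
structure SpacelikeSurface where
  /-- the embedding of ℝ² into the quadric -/
  emb : (Fin 2 → ℝ) → (Fin 4 → ℝ)
  /-- the future-directed unit normal vector field -/
  normal : (Fin 2 → ℝ) → (Fin 4 → ℝ)
  /-- the shape operator, in the coordinates of the parametrization -/
  shape : (Fin 2 → ℝ) → ((Fin 2 → ℝ) →ₗ[ℝ] (Fin 2 → ℝ))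
  smooth_emb : ContDiff ℝ (⊤ : ℕ∞) emb
  smooth_normal : ContDiff ℝ (⊤ : ℕ∞) normal
  inj : Function.Injective emb
  on_quadric : ∀ y, qform (emb y) (emb y) = -1
  spacelike : ∀ y v, v ≠ 0 → 0 < qform (fderiv ℝ emb y v) (fderiv ℝ emb y v)
  normal_unit : ∀ y, qform (normal y) (normal y) = -1
  normal_orth_base : ∀ y, qform (normal y) (emb y) = 0
  normal_orth : ∀ y v, qform (normal y) (fderiv ℝ emb y v) = 0
  normal_future : ∀ y, qform (normal y) (timeVec (emb y)) < 0
  shape_spec : ∀ y v, fderiv ℝ normal y v = fderiv ℝ emb y (shape y v)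

namespace SpacelikeSurface

variable (S : SpacelikeSurface)

/-- A spacelike surface is maximal if its shape operator is traceless. -/
def IsMaximal : Prop := ∀ y, LinearMap.trace ℝ (Fin 2 → ℝ) (S.shape y) = 0

/-- The surface as a subset of `ℝP³` (i.e. of AdS³). -/
def proj : Set RP3 :=
  {P | ∃ (y : Fin 2 → ℝ) (h : S.emb y ≠ 0), projPt (S.emb y) h = P}

/-- The asymptotic boundary `∂∞S` of the surface: the frontier `closure S \ S`. -/
def bdryAtInfinity : Set RP3 := closure S.proj \ S.proj

/-- The surface is entire if its frontier is contained in the boundary at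
infinity of AdS³. -/
def IsEntire : Prop := S.bdryAtInfinity ⊆ bdryAdS3

/-- The nonnegative principal curvature `λ` at a point: for a maximal surface the
principal curvatures are `±λ` with `λ = √(−det B)`. -/
def lambdaAt (y : Fin 2 → ℝ) : ℝ := Real.sqrt (-(LinearMap.det (S.shape y)))

/-- The supremum `‖λ‖∞` of the principal curvatures of the surface. -/
def lambdaSup : ℝ := ⨆ y, S.lambdaAt y

/-- Nonpositive curvature: by the Gauss equation `K = −1 + λ²`, this is `λ ≤ 1`. -/
def NonpositiveCurvature : Prop := ∀ y, S.lambdaAt y ≤ 1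

/-- Uniformly negative curvature: `λ ≤ 1 − ε` for some `ε > 0`. -/
def UniformlyNegativeCurvature : Prop := ∃ ε > 0, ∀ y, S.lambdaAt y ≤ 1 - ε

/-- The set of non-umbilical points of a maximal surface (where `λ ≠ 0`). -/
def nonUmbilic : Set (Fin 2 → ℝ) := {y | LinearMap.det (S.shape y) ≠ 0}

/-- The intrinsic distance of the induced Riemannian metric on the surface. -/
def idist (y₁ y₂ : Fin 2 → ℝ) : ℝ :=
  sInf {L | ∃ c : ℝ → (Fin 2 → ℝ), ContDiff ℝ (⊤ : ℕ∞) c ∧ c 0 = y₁ ∧ c 1 = y₂ ∧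
      L = ∫ t in (0:ℝ)..(1:ℝ),
        Real.sqrt (qform (deriv (fun s => S.emb (c s)) t) (deriv (fun s => S.emb (c s)) t))}

/-- `F` is the intrinsic gradient field of the function `f` on `U ⊆ S`: the vector field
which is `I`-dual to the differential of `f`. -/
def IsGradientOn (U : Set (Fin 2 → ℝ)) (f : (Fin 2 → ℝ) → ℝ)
    (F : (Fin 2 → ℝ) → (Fin 2 → ℝ)) : Prop :=
  ∀ y ∈ U, ∀ v, qform (fderiv ℝ S.emb y (F y)) (fderiv ℝ S.emb y v) = fderiv ℝ f y v

/-- `H` is the intrinsic Hessian (as a (1,1)-tensor) of a function with gradient field `F`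
on `U ⊆ S`: the tangential part of the ambient flat derivative of the ambient gradient
field (the normal part, in the ambient coordinates, lies in `span{σ(y), N(y)}`). -/
def IsHessianOn (U : Set (Fin 2 → ℝ)) (F : (Fin 2 → ℝ) → (Fin 2 → ℝ))
    (H : (Fin 2 → ℝ) → ((Fin 2 → ℝ) →ₗ[ℝ] (Fin 2 → ℝ))) : Prop :=
  ∀ y ∈ U, ∀ v, ∃ a b : ℝ,
    fderiv ℝ (fun y' => fderiv ℝ S.emb y' (F y')) y v
      = fderiv ℝ S.emb y (H y v) + a • S.emb y + b • S.normal y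

/-- The squared norm `‖grad f‖²` of a gradient field `F`, for the induced metric. -/
def gradNormSq (F : (Fin 2 → ℝ) → (Fin 2 → ℝ)) (y : Fin 2 → ℝ) : ℝ :=
  qform (fderiv ℝ S.emb y (F y)) (fderiv ℝ S.emb y (F y))

/-- `Δf` is the Laplace–Beltrami operator of the induced metric applied to `f`, on `U`:
the trace of the intrinsic Hessian. -/
def IsLaplacianOn (U : Set (Fin 2 → ℝ)) (f Δf : (Fin 2 → ℝ) → ℝ) : Prop :=
  ∃ F H, S.IsGradientOn U f F ∧ S.IsHessianOn U F H ∧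
    ∀ y ∈ U, Δf y = LinearMap.trace ℝ (Fin 2 → ℝ) (H y)

/-- `c` parametrizes an intrinsic geodesic of the surface: the ambient acceleration
is orthogonal to the surface, i.e. lies in `span{σ(c t), N(c t)}`. -/
def IsIntrinsicGeodesic (c : ℝ → (Fin 2 → ℝ)) : Prop :=
  ∀ t, ∃ a b : ℝ,
    deriv (deriv (fun s => S.emb (c s))) t = a • S.emb (c t) + b • S.normal (c t)

/-- `E` is a system of normal coordinates for the surface centered at `y₀` (i.e. the
exponential map of the induced metric at that point, read in an orthonormal frame). -/
def IsNormalCoordsAt (y₀ : Fin 2 → ℝ) (E : (Fin 2 → ℝ) → (Fin 2 → ℝ)) : Prop :=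
  E 0 = y₀ ∧ (∀ v, S.IsIntrinsicGeodesic (fun t => E (t • v))) ∧
  ∀ v w : Fin 2 → ℝ,
    qform (deriv (fun t : ℝ => S.emb (E (t • v))) 0) (deriv (fun t : ℝ => S.emb (E (t • w))) 0)
      = v 0 * w 0 + v 1 * w 1

end SpacelikeSurface

/-- The normal flow at time `ρ`: the parametrization of the surface `S_ρ` at constant
timelike distance `ρ` from `S`. -/
def parallelEmb (S : SpacelikeSurface) (ρ : ℝ) : (Fin 2 → ℝ) → (Fin 4 → ℝ) :=
  fun y => Real.cos ρ • S.emb y + Real.sin ρ • S.normal y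

/-- The pull-back to `S` of the first fundamental form of the parallel surface `S_ρ`. -/
def Irho (S : SpacelikeSurface) (ρ : ℝ) (y : Fin 2 → ℝ) (v w : Fin 2 → ℝ) : ℝ :=
  qform (fderiv ℝ (parallelEmb S ρ) y v) (fderiv ℝ (parallelEmb S ρ) y w)

/-- The second fundamental form of the parallel surface `S_ρ`, via `II_ρ = ½ dI_ρ/dρ`. -/
def IIrho (S : SpacelikeSurface) (ρ : ℝ) (y : Fin 2 → ℝ) (v w : Fin 2 → ℝ) : ℝ :=
  (1 / 2) * deriv (fun ρ' => Irho S ρ' y v w) ρ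

/-! ### Euclidean balls and `C⁰`/`C²` norms on ℝ² -/

/-- The Euclidean ball of radius `r` centered at the origin of ℝ². -/
def eball (r : ℝ) : Set (Fin 2 → ℝ) := {z | Real.sqrt ((z 0) ^ 2 + (z 1) ^ 2) < r}

/-- The `C⁰` norm of a function on the Euclidean ball of radius `r`. -/
def C0norm (u : (Fin 2 → ℝ) → ℝ) (r : ℝ) : ℝ :=
  sSup {a | ∃ z ∈ eball r, a = |u z|}

/-- The `C²` norm of a function on the Euclidean ball of radius `r`. -/
def C2norm (u : (Fin 2 → ℝ) → ℝ) (r : ℝ) : ℝ :=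
  sSup {a | ∃ z ∈ eball r, a = |u z| + ‖fderiv ℝ u z‖ + ‖fderiv ℝ (fderiv ℝ u) z‖}

end AdSPaper

namespace AdSPaper

lemma qf_comm (u v : Fin 4 → ℝ) : qform u v = qform v u := by unfold qform; ring

lemma qf_add_left (u v w : Fin 4 → ℝ) : qform (u + v) w = qform u w + qform v w := by
  unfold qform; simp [Pi.add_apply]; ring

lemma qf_smul_left (a : ℝ) (u w : Fin 4 → ℝ) : qform (a • u) w = a * qform u w := by
  unfold qform; simp [Pi.smul_apply, smul_eq_mul]; ring

lemma qf_neg_left (u w : Fin 4 → ℝ) : qform (-u) w = -qform u w := by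
  unfold qform; simp [Pi.neg_apply]; ring

lemma qf_sub_left (u v w : Fin 4 → ℝ) : qform (u - v) w = qform u w - qform v w := by
  unfold qform; simp [Pi.sub_apply]; ring

lemma qf_add_right (u v w : Fin 4 → ℝ) : qform w (u + v) = qform w u + qform w v := by
  unfold qform; simp [Pi.add_apply]; ring

lemma qf_smul_right (a : ℝ) (u w : Fin 4 → ℝ) : qform w (a • u) = a * qform w u := by
  unfold qform; simp [Pi.smul_apply, smul_eq_mul]; ring

lemma qf_neg_right (u w : Fin 4 → ℝ) : qform w (-u) = -qform w u := by
  unfold qform; simp [Pi.neg_apply]; ring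

lemma qf_sub_right (u v w : Fin 4 → ℝ) : qform w (u - v) = qform w u - qform w v := by
  unfold qform; simp [Pi.sub_apply]; ring


lemma gram_aux (A B C D E F F' : ℝ)
    (hA0 : 0 ≤ A) (hD0 : 0 ≤ D) (hF0 : 0 ≤ F)
    (hAD : B^2 ≤ A*D) (hAF : C^2 ≤ A*F) (hDF : E^2 ≤ D*F)
    (hZn : (A+1)*(D+1)*F' + 2*B*C*E - F'*B^2 - (A+1)*E^2 - (D+1)*C^2 = 0)
    (hZp : A*D*F + 2*B*C*E - F*B^2 - A*E^2 - D*C^2 = 0) :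
    F' ≤ F := by
  have key : (F' - F)*((A+1)*(D+1) - B^2) + (A*F - C^2) + (D*F - E^2) + F = 0 := by
    linear_combination hZn - hZp
  have hK : 1 ≤ (A+1)*(D+1) - B^2 := by nlinarith
  nlinarith [key, hK, hAF, hDF, hF0]

lemma orth_nonneg (x T w : Fin 4 → ℝ) (hx : qform x x = -1) (hT : qform T T = -1)
    (hxT : qform x T = 0) (hxw : qform x w = 0) (hTw : qform T w = 0) :
    0 ≤ qform w w := by
  simp only [qform] at hx hT hxT hxw hTw ⊢
  have h := gram_aux (x 0^2 + x 1^2) (x 0*T 0 + x 1*T 1) (x 0*w 0 + x 1*w 1)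
      (T 0^2 + T 1^2) (T 0*w 0 + T 1*w 1) (w 0^2 + w 1^2) (w 2^2 + w 3^2)
      (by positivity) (by positivity) (by positivity)
      (by nlinarith [sq_nonneg (x 0*T 1 - x 1*T 0)])
      (by nlinarith [sq_nonneg (x 0*w 1 - x 1*w 0)])
      (by nlinarith [sq_nonneg (T 0*w 1 - T 1*w 0)])
      ?_ (by ring)
  · nlinarith [h]
  · -- Zn: use hx, hT, hxT, hxw, hTw to replace (A+1) etc by neg-part Grams, then ring identity
    have e1 : x 2^2 + x 3^2 = x 0^2 + x 1^2 + 1 := by linear_combination -hx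
    have e2 : T 2^2 + T 3^2 = T 0^2 + T 1^2 + 1 := by linear_combination -hT
    have e3 : x 2*T 2 + x 3*T 3 = x 0*T 0 + x 1*T 1 := by linear_combination -hxT
    have e4 : x 2*w 2 + x 3*w 3 = x 0*w 0 + x 1*w 1 := by linear_combination -hxw
    have e5 : T 2*w 2 + T 3*w 3 = T 0*w 0 + T 1*w 1 := by linear_combination -hTw
    rw [← e1, ← e2, ← e3, ← e4, ← e5]
    ring


lemma orth_cs (x T v w : Fin 4 → ℝ) (hx : qform x x = -1) (hT : qform T T = -1)
    (hxT : qform x T = 0) (hxv : qform x v = 0) (hTv : qform T v = 0)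
    (hxw : qform x w = 0) (hTw : qform T w = 0) :
    (qform v w)^2 ≤ qform v v * qform w w := by
  have hw := orth_nonneg x T w hx hT hxT hxw hTw
  have hv := orth_nonneg x T v hx hT hxT hxv hTv
  rcases eq_or_lt_of_le hw with h0 | hpos
  · -- qform w w = 0 : show qform v w = 0
    rcases eq_or_ne (qform v w) 0 with hc | hc
    · rw [hc, ← h0]; nlinarith
    · exfalso
      set t : ℝ := -(qform v v + 1)/(2 * qform v w) with ht
      have h1 : qform x (v + t • w) = 0 := by
        rw [qf_add_right, qf_smul_right, hxv, hxw]; ring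
      have h2 : qform T (v + t • w) = 0 := by
        rw [qf_add_right, qf_smul_right, hTv, hTw]; ring
      have h3 := orth_nonneg x T (v + t • w) hx hT hxT h1 h2
      have hexp : qform (v + t • w) (v + t • w)
          = qform v v + 2 * t * qform v w + t^2 * qform w w := by
        rw [qf_add_left, qf_smul_left, qf_add_right, qf_add_right, qf_smul_right,
          qf_smul_right, qf_comm w v]
        ring
      rw [hexp, ← h0, ht] at h3
      have h2c : (2 : ℝ) * qform v w ≠ 0 := by
        simpa using hc
      have : qform v v + 2 * (-(qform v v + 1) / (2 * qform v w)) * qform v w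
          + (-(qform v v + 1) / (2 * qform v w)) ^ 2 * 0 = -1 := by
        field_simp
        ring
      rw [this] at h3
      linarith
  · have h1 : qform x (qform w w • v - qform v w • w) = 0 := by
      rw [qf_sub_right, qf_smul_right, qf_smul_right, hxv, hxw]; ring
    have h2 : qform T (qform w w • v - qform v w • w) = 0 := by
      rw [qf_sub_right, qf_smul_right, qf_smul_right, hTv, hTw]; ring
    have h3 := orth_nonneg x T _ hx hT hxT h1 h2
    have hexp : qform (qform w w • v - qform v w • w) (qform w w • v - qform v w • w)
        = qform w w * (qform v v * qform w w - (qform v w)^2) := by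
      rw [qf_sub_left, qf_smul_left, qf_smul_left, qf_sub_right, qf_sub_right,
        qf_smul_right, qf_smul_right, qf_smul_right, qf_smul_right, qf_comm w v]
      ring
    rw [hexp] at h3
    nlinarith [h3, hpos]

lemma ineq_i (A B C E τ : ℝ) (hA : 0 ≤ A) (hB : 0 ≤ B) (hC : 0 < C) (hE : 0 ≤ E)
    (hCE : 0 < C - E) (hτ : 1 ≤ τ^2) :
    |B + A*τ| * (C - E) ≤ (A + B) * |C*τ - E| := by
  have habs : 1 ≤ |τ| := by nlinarith [abs_nonneg τ, sq_abs τ]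
  rcases le_abs.mp habs with h1 | h1
  · rw [abs_of_nonneg (by nlinarith : (0:ℝ) ≤ B + A*τ),
        abs_of_nonneg (by nlinarith : (0:ℝ) ≤ C*τ - E)]
    nlinarith [mul_nonneg (add_nonneg (mul_nonneg hB hC.le) (mul_nonneg hA hE))
      (by linarith : (0:ℝ) ≤ τ - 1)]
  · have hτ' : τ ≤ -1 := by linarith
    rw [abs_of_nonpos (by nlinarith : C*τ - E ≤ 0)]
    rcases abs_cases (B + A*τ) with ⟨h, _⟩ | ⟨h, _⟩ <;> rw [h]
    · nlinarith [mul_nonneg (mul_nonneg hA (by linarith : (0:ℝ) ≤ -1 - τ))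
        (by linarith : (0:ℝ) ≤ 2*C - E),
        mul_nonneg (mul_nonneg hB hC.le) (by linarith : (0:ℝ) ≤ -1 - τ),
        mul_nonneg hB hE, mul_nonneg hA hC.le]
    · nlinarith [mul_nonneg (add_nonneg (mul_nonneg hA hE) (mul_nonneg hB hC.le))
        (by linarith : (0:ℝ) ≤ 1 - τ)]


set_option maxHeartbeats 2000000 in
lemma ineq_core (c1 c2 C E τ : ℝ) (hc1 : 0 < c1) (hc2 : 0 < c2)
    (hc1le : c1 ≤ 1) (hc2le : c2 ≤ 1) (hC : C = c1*c2) (hE : 0 ≤ E)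
    (hCE : 0 < C - E) (hCE1 : C + E ≤ 1) (hτ : 1 ≤ τ^2)
    (hm : (C*τ - E)^2 ≤ 1) :
    c2^2 * (τ^2 - 1) * (C - E)^2 ≤ 2 * (1 - (C-E)^2) * (C*τ - E)^2 := by
  have hC0 : 0 < C := by rw [hC]; positivity
  have hCc1 : C ≤ c1 := by rw [hC]; nlinarith
  have hu1 : C - E ≤ 1 := by linarith
  have hu2 : (C-E)^2 ≤ c1^2 := by nlinarith
  have hS : 0 ≤ 1 - (C-E)^2 := by nlinarith
  have hvpos : 0 < C + E := by linarith
  rcases le_or_gt (C^2 - E^2) E with h1 | h2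
  · -- vertex case
    have hstep : (τ^2 - 1) * (C^2 - E^2) ≤ (C*τ - E)^2 := by
      nlinarith [sq_nonneg (E*(C*τ - E) - (C^2 - E^2)), mul_pos hC0 hC0, sq_nonneg (C*τ - E)]
    have hu3 : C - E ≤ 2*(1 - (C-E)^2)*(C + E) := by
      nlinarith [mul_nonneg hvpos.le
        (by nlinarith : (0:ℝ) ≤ 1 + 2*(C-E) - 2*(C-E)^2), h1]
    have hsub : c2^2*(C-E) ≤ 2*(1 - (C-E)^2)*(C+E) := by
      nlinarith [mul_le_mul_of_nonneg_right (by nlinarith : c2^2 ≤ 1) hCE.le]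
    have m1 : ((τ^2-1)*(C^2-E^2)) * (c2^2*(C-E)) ≤ ((C*τ-E)^2) * (c2^2*(C-E)) :=
      mul_le_mul_of_nonneg_right hstep (by positivity)
    have m2 : ((C*τ-E)^2) * (c2^2*(C-E)) ≤ ((C*τ-E)^2) * (2*(1-(C-E)^2)*(C+E)) :=
      mul_le_mul_of_nonneg_left hsub (sq_nonneg _)
    have key : (c2^2*(τ^2-1)*(C-E)^2) * (C+E) ≤ (2*(1-(C-E)^2)*(C*τ-E)^2) * (C+E) := by
      calc (c2^2*(τ^2-1)*(C-E)^2) * (C+E)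
          = ((τ^2-1)*(C^2-E^2)) * (c2^2*(C-E)) := by ring
        _ ≤ ((C*τ-E)^2) * (c2^2*(C-E)) := m1
        _ ≤ ((C*τ-E)^2) * (2*(1-(C-E)^2)*(C+E)) := m2
        _ = (2*(1-(C-E)^2)*(C*τ-E)^2) * (C+E) := by ring
    exact le_of_mul_le_mul_right key hvpos
  · have habs : 1 ≤ |τ| := by nlinarith [abs_nonneg τ, sq_abs τ]
    have hC2E2 : 0 < C^2 - E^2 := by nlinarith
    rcases le_abs.mp habs with hτ1 | hτ1
    · -- τ ≥ 1
      have hDl : C - E ≤ C*τ - E := by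
        nlinarith [mul_le_mul_of_nonneg_left hτ1 hC0.le]
      have hD0 : 0 < C*τ - E := by linarith
      have hD1 : C*τ - E ≤ 1 := by nlinarith [hm, sq_nonneg (C*τ - E - 1)]
      have hf2 : 0 ≤ (C^2-E^2)*(1+(C*τ-E)) - 2*E*(C*τ-E) := by
        nlinarith [mul_nonneg hE (by linarith : (0:ℝ) ≤ 1 - (C*τ-E)),
          mul_nonneg (by linarith : (0:ℝ) ≤ C^2 - E^2 - E)
            (by linarith : (0:ℝ) ≤ 1 + (C*τ-E))]
      have hid : ((1+E)^2 - C^2)*(C*τ-E)^2 - C^2*(τ^2-1)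
          = (1-(C*τ-E))*((C^2-E^2)*(1+(C*τ-E)) - 2*E*(C*τ-E)) := by ring
      have hstepA : C^2*(τ^2-1) ≤ ((1+E)^2 - C^2)*(C*τ-E)^2 := by
        nlinarith [hid, mul_nonneg (by linarith : (0:ℝ) ≤ 1 - (C*τ-E)) hf2]
      have inner : (1+E+C)*(C-E)^2 ≤ 2*(1+(C-E))*c1^2 := by
        nlinarith [hu2, sq_nonneg (C-E), mul_pos hc1 hc1]
      have hstepB : ((1+E)^2 - C^2)*(C-E)^2*c2^2 ≤ 2*(1 - (C-E)^2)*C^2 := by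
        calc ((1+E)^2 - C^2)*(C-E)^2*c2^2
            = ((1-(C-E))*c2^2) * ((1+E+C)*(C-E)^2) := by ring
          _ ≤ ((1-(C-E))*c2^2) * (2*(1+(C-E))*c1^2) := by
              apply mul_le_mul_of_nonneg_left inner
              have : 0 ≤ 1 - (C-E) := by linarith
              positivity
          _ = 2*(1 - (C-E)^2)*(c1^2*c2^2) := by ring
          _ = 2*(1 - (C-E)^2)*C^2 := by rw [hC]; ring
      have m1 : (C^2*(τ^2-1)) * ((C-E)^2*c2^2) ≤ (((1+E)^2-C^2)*(C*τ-E)^2) * ((C-E)^2*c2^2) :=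
        mul_le_mul_of_nonneg_right hstepA (by positivity)
      have m2 : (((1+E)^2-C^2)*(C-E)^2*c2^2) * ((C*τ-E)^2) ≤ (2*(1-(C-E)^2)*C^2) * ((C*τ-E)^2) :=
        mul_le_mul_of_nonneg_right hstepB (sq_nonneg _)
      have key : ((c2^2*(τ^2-1)*(C-E)^2)) * (C^2) ≤ ((2*(1-(C-E)^2)*(C*τ-E)^2)) * (C^2) := by
        calc (c2^2*(τ^2-1)*(C-E)^2) * (C^2)
            = (C^2*(τ^2-1)) * ((C-E)^2*c2^2) := by ring
          _ ≤ (((1+E)^2-C^2)*(C*τ-E)^2) * ((C-E)^2*c2^2) := m1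
          _ = (((1+E)^2-C^2)*(C-E)^2*c2^2) * ((C*τ-E)^2) := by ring
          _ ≤ (2*(1-(C-E)^2)*C^2) * ((C*τ-E)^2) := m2
          _ = (2*(1-(C-E)^2)*(C*τ-E)^2) * (C^2) := by ring
      exact le_of_mul_le_mul_right key (by positivity)
    · -- τ ≤ -1
      have hτ' : τ ≤ -1 := by linarith
      have hDu : C*τ - E ≤ -(C+E) := by
        nlinarith [mul_le_mul_of_nonneg_left hτ' hC0.le]
      have hD0 : C*τ - E < 0 := by linarith
      have hD1 : -1 ≤ C*τ - E := by nlinarith [hm, sq_nonneg (C*τ - E + 1)]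
      have hf2 : 0 ≤ -(2*E*(C*τ-E) + (C^2-E^2)*((C*τ-E)-1)) := by
        nlinarith [mul_nonneg hE (by linarith : (0:ℝ) ≤ -(C*τ-E)),
          mul_nonneg hC2E2.le (by linarith : (0:ℝ) ≤ 1 - (C*τ-E))]
      have hid : ((1-E)^2 - C^2)*(C*τ-E)^2 - C^2*(τ^2-1)
          = (-1-(C*τ-E))*(2*E*(C*τ-E) + (C^2-E^2)*((C*τ-E)-1)) := by ring
      have hstepA : C^2*(τ^2-1) ≤ ((1-E)^2 - C^2)*(C*τ-E)^2 := by
        nlinarith [hid, mul_nonneg (by linarith : (0:ℝ) ≤ 1 + (C*τ-E)) hf2]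
      have inner : (1-E-C)*(C-E)^2 ≤ (1-(C-E))*c1^2 := by
        nlinarith [mul_le_mul_of_nonneg_right
          (by linarith : 1-E-C ≤ 1-(C-E)) (sq_nonneg (C-E)),
          mul_le_mul_of_nonneg_left hu2 (by linarith : (0:ℝ) ≤ 1-(C-E))]
      have hstepB : ((1-E)^2 - C^2)*(C-E)^2*c2^2 ≤ 2*(1 - (C-E)^2)*C^2 := by
        calc ((1-E)^2 - C^2)*(C-E)^2*c2^2
            = ((1-E-C)*(C-E)^2) * ((1+(C-E))*c2^2) := by ring
          _ ≤ ((1-(C-E))*c1^2) * ((1+(C-E))*c2^2) := by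
              apply mul_le_mul_of_nonneg_right inner
              have : 0 ≤ 1 + (C-E) := by linarith
              positivity
          _ = (1 - (C-E)^2)*(c1^2*c2^2) := by ring
          _ ≤ 2*(1 - (C-E)^2)*(c1^2*c2^2) := by nlinarith [mul_nonneg hS (by positivity : (0:ℝ) ≤ c1^2*c2^2)]
          _ = 2*(1 - (C-E)^2)*C^2 := by rw [hC]; ring
      have m1 : (C^2*(τ^2-1)) * ((C-E)^2*c2^2) ≤ (((1-E)^2-C^2)*(C*τ-E)^2) * ((C-E)^2*c2^2) :=
        mul_le_mul_of_nonneg_right hstepA (by positivity)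
      have m2 : (((1-E)^2-C^2)*(C-E)^2*c2^2) * ((C*τ-E)^2) ≤ (2*(1-(C-E)^2)*C^2) * ((C*τ-E)^2) :=
        mul_le_mul_of_nonneg_right hstepB (sq_nonneg _)
      have key : ((c2^2*(τ^2-1)*(C-E)^2)) * (C^2) ≤ ((2*(1-(C-E)^2)*(C*τ-E)^2)) * (C^2) := by
        calc (c2^2*(τ^2-1)*(C-E)^2) * (C^2)
            = (C^2*(τ^2-1)) * ((C-E)^2*c2^2) := by ring
          _ ≤ (((1-E)^2-C^2)*(C*τ-E)^2) * ((C-E)^2*c2^2) := m1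
          _ = (((1-E)^2-C^2)*(C-E)^2*c2^2) * ((C*τ-E)^2) := by ring
          _ ≤ (2*(1-(C-E)^2)*C^2) * ((C*τ-E)^2) := m2
          _ = (2*(1-(C-E)^2)*(C*τ-E)^2) * (C^2) := by ring
      exact le_of_mul_le_mul_right key (by positivity)


lemma sq_le_imp (a b : ℝ) (ha : 0 ≤ a) (hb : 0 ≤ b) (h : a^2 ≤ b^2) : a ≤ b := by
  nlinarith

lemma abs_lt_one_sq (c : ℝ) (h : |c| < 1) : c^2 < 1 := by
  nlinarith [abs_nonneg c, sq_abs c]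

lemma nonneg_of_mul (t u v : ℝ) (h : t*u = v) (hu : 0 < u) (hv : 0 ≤ v) : 0 ≤ t := by
  nlinarith

lemma trig_sum_le_one (s1 c1 s2 c2 : ℝ) (py1 : s1^2 + c1^2 = 1) (py2 : s2^2 + c2^2 = 1) :
    c1*c2 + s1*s2 ≤ 1 := by
  nlinarith [sq_nonneg (c1-c2), sq_nonneg (s1-s2)]

lemma m_sq_le_one_of_tau (s1 c1 s2 c2 τ : ℝ) (hs1 : 0 ≤ s1) (hc1 : 0 < c1)
    (hs2 : 0 ≤ s2) (hc2 : 0 < c2) (hCE1 : c1*c2 + s1*s2 ≤ 1) (hτ : τ^2 ≤ 1) :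
    (c1*c2*τ - s1*s2)^2 ≤ 1 := by
  have hτu : τ ≤ 1 := by nlinarith [sq_nonneg (τ-1)]
  have hτl : -1 ≤ τ := by nlinarith [sq_nonneg (τ+1)]
  nlinarith [mul_nonneg (mul_nonneg (mul_pos hc1 hc2).le (by linarith : (0:ℝ) ≤ 1+τ))
      (by nlinarith [mul_nonneg hs1 hs2,
          mul_nonneg (mul_pos hc1 hc2).le (by linarith : (0:ℝ) ≤ 1-τ)] :
          (0:ℝ) ≤ c1*c2*(1-τ) + 2*(s1*s2)),
    mul_nonneg hs1 hs2, mul_pos hc1 hc2]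

lemma unit_normalize (Q : ℝ) (hQ : Q < 0) :
    (Real.sqrt (-Q))⁻¹ * ((Real.sqrt (-Q))⁻¹ * Q) = -1 := by
  have h := Real.sq_sqrt (show (0:ℝ) ≤ -Q by linarith)
  have hp := Real.sqrt_pos.mpr (show (0:ℝ) < -Q by linarith)
  field_simp
  nlinarith [h]


set_option maxHeartbeats 1000000

/-- **Lemma (distance and width).** Let `P₋ = pm^⊥`, `P₊ = pp^⊥` be disjoint spacelike
planes in AdS³, and let `x` be a point with timelike geodesic segments `l₁`, `l₂` from `x`
orthogonal to `P₋` and `P₊`, of lengths `w₁ ≤ w₂`, with endpoints `p = cos w₁ x + sin w₁ T₁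
∈ P₋` and `q = cos w₂ x + sin w₂ T₂ ∈ P₊`.  Let `p′ ∈ P₋` be a point at hyperbolic
distance `R′` from `p` in `P₋`, and let `z = (π|_{P₊})⁻¹(p′)` be the point of `P₊`
projecting orthogonally onto `p′`, at timelike distance `d` from `P₋` (so that
`sin d = |⟨z,pm⟩|`).  Then `tan d ≤ (1+√2)·cosh R′·tan(w₁+w₂)`. -/
theorem distance_and_width
    (x pm pp T₁ T₂ p' z : Fin 4 → ℝ) (w₁ w₂ R' : ℝ)
    (hx : qform x x = -1)
    (hpm : qform pm pm = -1) (hpp : qform pp pp = -1)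
    -- the planes `pm^⊥` and `pp^⊥` are disjoint in AdS³:
    (hdisj : ∀ u : Fin 4 → ℝ, qform u u = -1 → qform u pm = 0 → qform u pp ≠ 0)
    (hw₁ : 0 ≤ w₁) (hw₁₂ : w₁ ≤ w₂) (hsum : w₁ + w₂ < π / 2) (hR' : 0 ≤ R')
    -- `l₁` is a timelike geodesic from `x`, orthogonal to `P₋`, of length `w₁`:
    (hT₁ : qform T₁ T₁ = -1) (hxT₁ : qform x T₁ = 0)
    (hfoot₁ : qform (Real.cos w₁ • x + Real.sin w₁ • T₁) pm = 0)
    (horth₁ : -Real.sin w₁ • x + Real.cos w₁ • T₁ = pm ∨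
              -Real.sin w₁ • x + Real.cos w₁ • T₁ = -pm)
    -- `l₂` is a timelike geodesic from `x`, orthogonal to `P₊`, of length `w₂`:
    (hT₂ : qform T₂ T₂ = -1) (hxT₂ : qform x T₂ = 0)
    (hfoot₂ : qform (Real.cos w₂ • x + Real.sin w₂ • T₂) pp = 0)
    (horth₂ : -Real.sin w₂ • x + Real.cos w₂ • T₂ = pp ∨
              -Real.sin w₂ • x + Real.cos w₂ • T₂ = -pp)
    -- `p′` lies on `P₋` at hyperbolic distance `R′` from the foot `p` of `l₁`:
    (hp' : qform p' p' = -1) (hp'P : qform p' pm = 0)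
    (hdist : |qform (Real.cos w₁ • x + Real.sin w₁ • T₁) p'| = Real.cosh R')
    -- `z` lies on `P₊`, in the domain of dependence of `P₋`, and projects
    -- orthogonally onto `p′ ∈ P₋`:
    (hz : qform z z = -1) (hzP : qform z pp = 0) (hzdom : |qform z pm| < 1)
    (hproj : z + qform z pm • pm = Real.sqrt (1 - (qform z pm) ^ 2) • p' ∨
             z + qform z pm • pm = -(Real.sqrt (1 - (qform z pm) ^ 2)) • p') :
    Real.tan (Real.arcsin |qform z pm|)
      ≤ (1 + Real.sqrt 2) * Real.cosh R' * Real.tan (w₁ + w₂) := by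
  -- basic trigonometric facts
  have hw₂0 : 0 ≤ w₂ := le_trans hw₁ hw₁₂
  have hpi := Real.pi_pos
  have hc1 : 0 < Real.cos w₁ := Real.cos_pos_of_mem_Ioo ⟨by linarith, by linarith⟩
  have hc2 : 0 < Real.cos w₂ := Real.cos_pos_of_mem_Ioo ⟨by linarith, by linarith⟩
  have hs1 : 0 ≤ Real.sin w₁ := Real.sin_nonneg_of_nonneg_of_le_pi hw₁ (by linarith)
  have hs2 : 0 ≤ Real.sin w₂ := Real.sin_nonneg_of_nonneg_of_le_pi hw₂0 (by linarith)
  have py1 : Real.sin w₁^2 + Real.cos w₁^2 = 1 := Real.sin_sq_add_cos_sq w₁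
  have py2 : Real.sin w₂^2 + Real.cos w₂^2 = 1 := Real.sin_sq_add_cos_sq w₂
  set s1 := Real.sin w₁
  set c1 := Real.cos w₁
  set s2 := Real.sin w₂
  set c2 := Real.cos w₂
  have hc1le : c1 ≤ 1 := Real.cos_le_one w₁
  have hc2le : c2 ≤ 1 := Real.cos_le_one w₂
  have hcosS : 0 < Real.cos (w₁ + w₂) :=
    Real.cos_pos_of_mem_Ioo ⟨by linarith, hsum⟩
  have hCE : 0 < c1*c2 - s1*s2 := by
    have := Real.cos_add w₁ w₂; rw [this] at hcosS; linarith
  have hCE1 : c1*c2 + s1*s2 ≤ 1 := trig_sum_le_one s1 c1 s2 c2 py1 py2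
  have httc : Real.tan (w₁+w₂) * (c1*c2 - s1*s2) = s1*c2 + c1*s2 := by
    have h1 : Real.tan (w₁+w₂) * Real.cos (w₁+w₂) = Real.sin (w₁+w₂) :=
      Real.tan_mul_cos (ne_of_gt hcosS)
    rw [Real.cos_add, Real.sin_add] at h1
    exact h1
  have hABnn : (0:ℝ) ≤ s1*c2 + c1*s2 := by positivity
  have htannn : 0 ≤ Real.tan (w₁+w₂) := nonneg_of_mul _ _ _ httc hCE hABnn
  -- sign extraction for pm, pp
  obtain ⟨e₁, he₁, hpm2⟩ : ∃ e : ℝ, (e = 1 ∨ e = -1) ∧ pm = e • (-s1 • x + c1 • T₁) := by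
    rcases horth₁ with h | h
    · exact ⟨1, Or.inl rfl, by rw [one_smul, h]⟩
    · exact ⟨-1, Or.inr rfl, by rw [neg_one_smul, h, neg_neg]⟩
  obtain ⟨e₂, he₂, hpp2⟩ : ∃ e : ℝ, (e = 1 ∨ e = -1) ∧ pp = e • (-s2 • x + c2 • T₂) := by
    rcases horth₂ with h | h
    · exact ⟨1, Or.inl rfl, by rw [one_smul, h]⟩
    · exact ⟨-1, Or.inr rfl, by rw [neg_one_smul, h, neg_neg]⟩
  -- scalar abbreviations
  obtain ⟨a, hadef⟩ : ∃ r, qform x p' = r := ⟨_, rfl⟩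
  obtain ⟨b1, hb1def⟩ : ∃ r, qform T₁ p' = r := ⟨_, rfl⟩
  obtain ⟨b2, hb2def⟩ : ∃ r, qform T₂ p' = r := ⟨_, rfl⟩
  obtain ⟨τ, hτdef⟩ : ∃ r, qform T₁ T₂ = r := ⟨_, rfl⟩
  have cxT₁ : qform T₁ x = 0 := by rw [qf_comm]; exact hxT₁
  have cxT₂ : qform T₂ x = 0 := by rw [qf_comm]; exact hxT₂
  have cT : qform T₂ T₁ = τ := by rw [qf_comm]; exact hτdef
  have cpx : qform p' x = a := by rw [qf_comm]; exact hadef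
  have cpT₁ : qform p' T₁ = b1 := by rw [qf_comm]; exact hb1def
  have cpT₂ : qform p' T₂ = b2 := by rw [qf_comm]; exact hb2def
  -- foot relation : c1*b1 = s1*a
  have hb1 : c1 * b1 = s1 * a := by
    have h0 : qform p' pm = e₁ * (-s1 * a + c1 * b1) := by
      rw [hpm2]
      simp only [qf_add_left, qf_add_right, qf_smul_left, qf_smul_right, qf_neg_left,
        qf_neg_right, hx, hT₁, hT₂, hxT₁, hxT₂, cxT₁, cxT₂, hτdef, cT, hadef, hb1def,
        hb2def, cpx, cpT₁, cpT₂, hp']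
      try ring
    rw [hp'P] at h0
    rcases he₁ with rfl | rfl <;> linarith [h0]
  -- |K| = cosh R'
  have hKabs : |c1 * a + s1 * b1| = Real.cosh R' := by
    rw [← hdist]
    congr 1
    simp only [qf_add_left, qf_smul_left, hadef, hb1def]
  have hcosh1 : 1 ≤ Real.cosh R' := Real.one_le_cosh R'
  have hcosh0 : 0 ≤ Real.cosh R' := by linarith
  have hsinh0 : 0 ≤ Real.sinh R' := Real.sinh_nonneg_iff.mpr hR'
  have hsc : Real.sinh R' ≤ Real.cosh R' := (Real.sinh_lt_cosh R').le
  have hK2 : (c1 * a + s1 * b1)^2 = (Real.cosh R')^2 := by rw [← hKabs, sq_abs]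
  have haK : a = c1 * (c1 * a + s1 * b1) := by
    linear_combination (-a) * py1 + (-s1) * hb1
  have hbK : b1 = s1 * (c1 * a + s1 * b1) := by
    linear_combination (-b1) * py1 + c1 * hb1
  -- τ² ≥ 1
  have hτor1 : qform x (T₂ + τ • T₁) = 0 := by
    rw [qf_add_right, qf_smul_right, hxT₂, hxT₁]; ring
  have hτor2 : qform T₁ (T₂ + τ • T₁) = 0 := by
    rw [qf_add_right, qf_smul_right, hτdef, hT₁]; ring
  have hτq : qform (T₂ + τ • T₁) (T₂ + τ • T₁) = τ^2 - 1 := by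
    simp only [qf_add_left, qf_add_right, qf_smul_left, qf_smul_right, hT₂, hT₁, hτdef, cT]
    ring
  have hτsq : 1 ≤ τ^2 := by
    have h0 := orth_nonneg x T₁ (T₂ + τ • T₁) hx hT₁ hxT₁ hτor1 hτor2
    rw [hτq] at h0; linarith
  -- Cauchy-Schwarz bound for b2 + τ b1
  have hr2 : (b2 + τ*b1)^2 ≤ ((Real.cosh R')^2 - 1) * (τ^2 - 1) := by
    have o1 : qform x (p' + a • x + b1 • T₁) = 0 := by
      simp only [qf_add_right, qf_smul_right, hadef, hx, hxT₁]; ring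
    have o2 : qform T₁ (p' + a • x + b1 • T₁) = 0 := by
      simp only [qf_add_right, qf_smul_right, hb1def, cxT₁, hT₁]; ring
    have hcs := orth_cs x T₁ (p' + a • x + b1 • T₁) (T₂ + τ • T₁) hx hT₁ hxT₁ o1 o2 hτor1 hτor2
    have e1 : qform (p' + a • x + b1 • T₁) (T₂ + τ • T₁) = b2 + τ*b1 := by
      simp only [qf_add_left, qf_add_right, qf_smul_left, qf_smul_right, hx, hT₁, hT₂,
        hxT₁, hxT₂, cxT₁, cxT₂, hτdef, cT, hadef, hb1def, hb2def, cpx, cpT₁, cpT₂, hp']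
      ring
    have e2 : qform (p' + a • x + b1 • T₁) (p' + a • x + b1 • T₁) = a^2 + b1^2 - 1 := by
      simp only [qf_add_left, qf_add_right, qf_smul_left, qf_smul_right, hx, hT₁, hT₂,
        hxT₁, hxT₂, cxT₁, cxT₂, hτdef, cT, hadef, hb1def, hb2def, cpx, cpT₁, cpT₂, hp']
      ring
    rw [e1, e2, hτq] at hcs
    have eK : a^2 + b1^2 - 1 = (Real.cosh R')^2 - 1 := by
      have : a^2 + b1^2 = (c1 * a + s1 * b1)^2 := by
        linear_combination ((c1*a+s1*b1)^2) * py1 + (a + c1*(c1*a+s1*b1)) * haK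
          + (b1 + s1*(c1*a+s1*b1)) * hbK
      rw [this, hK2]
    rw [eK] at hcs
    exact hcs
  -- disjointness: (c1 c2 τ - s1 s2)² ≤ 1
  have hm2le : (c1*c2*τ - s1*s2)^2 ≤ 1 := by
    by_contra hgt
    push_neg at hgt
    have hτ2 : 1 < τ^2 := by
      by_contra hle
      push_neg at hle
      exact absurd (m_sq_le_one_of_tau s1 c1 s2 c2 τ hs1 hc1 hs2 hc2 hCE1 hle)
        (not_le.mpr hgt)
    have hupm0 : qform ((c1*c2*(1-τ^2)) • x + (s1*c2 + c1*s2*τ) • T₁ + (c1*s2 + s1*c2*τ) • T₂)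
        (-s1 • x + c1 • T₁) = 0 := by
      simp only [qf_add_left, qf_add_right, qf_smul_left, qf_smul_right, qf_neg_left,
        qf_neg_right, hx, hT₁, hT₂, hxT₁, hxT₂, cxT₁, cxT₂, hτdef, cT]
      ring
    have hupp0 : qform ((c1*c2*(1-τ^2)) • x + (s1*c2 + c1*s2*τ) • T₁ + (c1*s2 + s1*c2*τ) • T₂)
        (-s2 • x + c2 • T₂) = 0 := by
      simp only [qf_add_left, qf_add_right, qf_smul_left, qf_smul_right, qf_neg_left,
        qf_neg_right, hx, hT₁, hT₂, hxT₁, hxT₂, cxT₁, cxT₂, hτdef, cT]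
      ring
    have hQ : qform ((c1*c2*(1-τ^2)) • x + (s1*c2 + c1*s2*τ) • T₁ + (c1*s2 + s1*c2*τ) • T₂)
        ((c1*c2*(1-τ^2)) • x + (s1*c2 + c1*s2*τ) • T₁ + (c1*s2 + s1*c2*τ) • T₂)
        = (τ^2-1)*(1-(c1*c2*τ - s1*s2)^2) := by
      simp only [qf_add_left, qf_add_right, qf_smul_left, qf_smul_right, hx, hT₁, hT₂,
        hxT₁, hxT₂, cxT₁, cxT₂, hτdef, cT]
      linear_combination ((τ^2-1)*(s2^2+c2^2)) * py1 + (τ^2-1) * py2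
    set u₀ := (c1*c2*(1-τ^2)) • x + (s1*c2 + c1*s2*τ) • T₁ + (c1*s2 + s1*c2*τ) • T₂ with hu₀
    have hQneg : qform u₀ u₀ < 0 := by
      rw [hQ]
      exact mul_neg_of_pos_of_neg (by linarith) (by linarith)
    have hrpos : 0 < Real.sqrt (-qform u₀ u₀) := Real.sqrt_pos.mpr (by linarith)
    have hrsq : Real.sqrt (-qform u₀ u₀)^2 = -qform u₀ u₀ := Real.sq_sqrt (by linarith)
    have huu : qform ((Real.sqrt (-qform u₀ u₀))⁻¹ • u₀) ((Real.sqrt (-qform u₀ u₀))⁻¹ • u₀) = -1 := by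
      rw [qf_smul_left, qf_smul_right]
      exact unit_normalize _ hQneg
    have hu_pm : qform ((Real.sqrt (-qform u₀ u₀))⁻¹ • u₀) pm = 0 := by
      rw [qf_smul_left, hpm2, qf_smul_right, hupm0]
      ring
    have hu_pp : qform ((Real.sqrt (-qform u₀ u₀))⁻¹ • u₀) pp = 0 := by
      rw [qf_smul_left, hpp2, qf_smul_right, hupp0]
      ring
    exact hdisj _ huu hu_pm hu_pp
  -- the quantities M and P
  have hMeq : qform pm pp = e₁ * (e₂ * (c1*c2*τ - s1*s2)) := by
    rw [hpm2, hpp2, qf_smul_left, qf_smul_right]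
    simp only [qf_add_left, qf_add_right, qf_smul_left, qf_smul_right, qf_neg_left,
      qf_neg_right, hx, hT₁, hT₂, hxT₁, hxT₂, cxT₁, cxT₂, hτdef, cT]
    ring
  have hMabs : |qform pm pp| = |c1*c2*τ - s1*s2| := by
    rw [hMeq, abs_mul, abs_mul]
    rcases he₁ with rfl | rfl <;> rcases he₂ with rfl | rfl <;> norm_num
  have hPeq : qform p' pp = e₂ * (c2*b2 - s2*a) := by
    rw [hpp2, qf_smul_right]
    simp only [qf_add_right, qf_smul_right, qf_neg_right, cpx, cpT₂]
    ring
  have hPabs : |qform p' pp| = |c2*b2 - s2*a| := by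
    rw [hPeq, abs_mul]
    rcases he₂ with rfl | rfl <;> norm_num
  have hPne : qform p' pp ≠ 0 := hdisj p' hp' hp'P
  have hPSne : c2*b2 - s2*a ≠ 0 := by
    intro h0
    apply hPne
    rw [hPeq, h0, mul_zero]
  -- the projection equation
  obtain ⟨cv, hcv⟩ : ∃ r, qform z pm = r := ⟨_, rfl⟩
  rw [hcv] at hzdom hproj ⊢
  have hcv2 : cv^2 < 1 := abs_lt_one_sq cv hzdom
  have hsqpos : 0 < Real.sqrt (1 - cv^2) := Real.sqrt_pos.mpr (by linarith)
  have habseq : |cv| * |qform pm pp| = Real.sqrt (1 - cv^2) * |qform p' pp| := by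
    rcases hproj with h | h
    · have h' := congrArg (fun v => qform v pp) h
      simp only [qf_add_left, qf_smul_left, hzP] at h'
      have h'' : cv * qform pm pp = Real.sqrt (1 - cv^2) * qform p' pp := by linarith [h']
      calc |cv| * |qform pm pp| = |cv * qform pm pp| := (abs_mul _ _).symm
        _ = |Real.sqrt (1 - cv^2) * qform p' pp| := by rw [h'']
        _ = Real.sqrt (1 - cv^2) * |qform p' pp| := by
            rw [abs_mul, abs_of_nonneg (Real.sqrt_nonneg _)]
    · have h' := congrArg (fun v => qform v pp) h
      simp only [qf_add_left, qf_smul_left, qf_neg_left, qf_neg_right, neg_smul, hzP] at h'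
      have h'' : cv * qform pm pp = -(Real.sqrt (1 - cv^2) * qform p' pp) := by linarith [h']
      calc |cv| * |qform pm pp| = |cv * qform pm pp| := (abs_mul _ _).symm
        _ = |-(Real.sqrt (1 - cv^2) * qform p' pp)| := by rw [h'']
        _ = Real.sqrt (1 - cv^2) * |qform p' pp| := by
            rw [abs_neg, abs_mul, abs_of_nonneg (Real.sqrt_nonneg _)]
  rw [hMabs, hPabs] at habseq
  -- M ≠ 0
  have hMne : c1*c2*τ - s1*s2 ≠ 0 := by
    intro h0
    rw [h0, abs_zero, mul_zero] at habseq
    rcases mul_eq_zero.mp habseq.symm with h | h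
    · exact absurd h (ne_of_gt hsqpos)
    · exact hPSne (abs_eq_zero.mp h)
  have hMpos : 0 < |c1*c2*τ - s1*s2| := abs_pos.mpr hMne
  -- bound |PS|
  have hsqτ : Real.sqrt (τ^2-1)^2 = τ^2-1 := Real.sq_sqrt (by linarith)
  have hsqτnn : 0 ≤ Real.sqrt (τ^2-1) := Real.sqrt_nonneg _
  have hrabs : |b2 + τ*b1| ≤ Real.sinh R' * Real.sqrt (τ^2-1) := by
    have hsinh2 : (Real.cosh R')^2 - 1 = (Real.sinh R')^2 := by
      have := Real.cosh_sq R'; linarith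
    rw [hsinh2] at hr2
    apply sq_le_imp _ _ (abs_nonneg _) (mul_nonneg hsinh0 hsqτnn)
    rw [sq_abs, mul_pow, hsqτ]
    exact hr2
  have hPSdec : c2*b2 - s2*a = -((c1*s2 + s1*c2*τ) * (c1 * a + s1 * b1)) + c2*(b2 + τ*b1) := by
    linear_combination (-s2) * haK + (-c2*τ) * hbK
  have hPSbound : |c2*b2 - s2*a|
      ≤ Real.cosh R' * |c1*s2 + s1*c2*τ| + c2 * (Real.sinh R' * Real.sqrt (τ^2-1)) := by
    rw [hPSdec]
    refine le_trans (abs_add_le _ _) ?_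
    rw [abs_neg, abs_mul, abs_mul, hKabs, abs_of_pos hc2]
    have h1 : |c1*s2 + s1*c2*τ| * Real.cosh R' = Real.cosh R' * |c1*s2 + s1*c2*τ| := by ring
    rw [h1]
    have h2 : c2 * |b2 + τ*b1| ≤ c2 * (Real.sinh R' * Real.sqrt (τ^2-1)) :=
      mul_le_mul_of_nonneg_left hrabs hc2.le
    linarith
  -- apply the two inequalities
  have hi1 : |c1*s2 + s1*c2*τ| * (c1*c2 - s1*s2)
      ≤ (s1*c2 + c1*s2) * |c1*c2*τ - s1*s2| := by
    have := ineq_i (s1*c2) (c1*s2) (c1*c2) (s1*s2)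
      τ (by positivity) (by positivity) (by positivity) (by positivity) hCE hτsq
    exact this
  have hi2 : c2 * Real.sqrt (τ^2-1) * (c1*c2 - s1*s2)
      ≤ Real.sqrt 2 * (s1*c2 + c1*s2) * |c1*c2*τ - s1*s2| := by
    have hcore := ineq_core c1 c2 (c1*c2) (s1*s2) τ hc1 hc2 hc1le hc2le rfl
      (by positivity) hCE hCE1 hτsq hm2le
    have hABsq : (s1*c2 + c1*s2)^2 = 1 - (c1*c2 - s1*s2)^2 := by
      linear_combination (s2^2 + c2^2) * py1 + py2
    have hL : (c2 * Real.sqrt (τ^2-1) * (c1*c2 - s1*s2))^2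
        = c2^2 * (τ^2-1) * (c1*c2-s1*s2)^2 := by
      rw [mul_pow, mul_pow, hsqτ]
      try ring
    have hR : (Real.sqrt 2 * (s1*c2 + c1*s2) * |c1*c2*τ - s1*s2|)^2
        = 2 * (1 - (c1*c2 - s1*s2)^2) * (c1*c2*τ - s1*s2)^2 := by
      simp only [mul_pow, sq_abs, Real.sq_sqrt (show (0:ℝ) ≤ 2 by norm_num)]
      rw [hABsq]
      try ring
    have hLnn : 0 ≤ c2 * Real.sqrt (τ^2-1) * (c1*c2 - s1*s2) := by positivity
    have hRnn : 0 ≤ Real.sqrt 2 * (s1*c2 + c1*s2) * |c1*c2*τ - s1*s2| := by positivity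
    apply sq_le_imp _ _ hLnn hRnn
    rw [hL, hR]
    exact hcore
  -- key bound
  have hkey2 : (c1*c2 - s1*s2) * |c2*b2 - s2*a|
      ≤ (1 + Real.sqrt 2) * Real.cosh R' * ((s1*c2 + c1*s2) * |c1*c2*τ - s1*s2|) := by
    have g1 : Real.cosh R' * (|c1*s2 + s1*c2*τ| * (c1*c2 - s1*s2))
        ≤ Real.cosh R' * ((s1*c2 + c1*s2) * |c1*c2*τ - s1*s2|) :=
      mul_le_mul_of_nonneg_left hi1 hcosh0
    have g2 : Real.sinh R' * (c2 * Real.sqrt (τ^2-1) * (c1*c2 - s1*s2))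
        ≤ Real.sinh R' * (Real.sqrt 2 * (s1*c2 + c1*s2) * |c1*c2*τ - s1*s2|) :=
      mul_le_mul_of_nonneg_left hi2 hsinh0
    have g3 : Real.sinh R' * (Real.sqrt 2 * (s1*c2 + c1*s2) * |c1*c2*τ - s1*s2|)
        ≤ Real.cosh R' * (Real.sqrt 2 * (s1*c2 + c1*s2) * |c1*c2*τ - s1*s2|) :=
      mul_le_mul_of_nonneg_right hsc (by positivity)
    calc (c1*c2 - s1*s2) * |c2*b2 - s2*a|
        ≤ (c1*c2 - s1*s2) * (Real.cosh R' * |c1*s2 + s1*c2*τ|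
            + c2 * (Real.sinh R' * Real.sqrt (τ^2-1))) :=
          mul_le_mul_of_nonneg_left hPSbound hCE.le
      _ = Real.cosh R' * (|c1*s2 + s1*c2*τ| * (c1*c2 - s1*s2))
          + Real.sinh R' * (c2 * Real.sqrt (τ^2-1) * (c1*c2 - s1*s2)) := by ring
      _ ≤ Real.cosh R' * ((s1*c2 + c1*s2) * |c1*c2*τ - s1*s2|)
          + Real.cosh R' * (Real.sqrt 2 * (s1*c2 + c1*s2) * |c1*c2*τ - s1*s2|) := by
          linarith
      _ = (1 + Real.sqrt 2) * Real.cosh R' * ((s1*c2 + c1*s2) * |c1*c2*τ - s1*s2|) := by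
          ring
  -- conclusion
  rw [Real.tan_arcsin, sq_abs, div_le_iff₀ hsqpos]
  refine le_of_mul_le_mul_right ?_ (mul_pos hMpos hCE)
  calc |cv| * (|c1*c2*τ - s1*s2| * (c1*c2 - s1*s2))
      = (|cv| * |c1*c2*τ - s1*s2|) * (c1*c2 - s1*s2) := by ring
    _ = (Real.sqrt (1 - cv^2) * |c2*b2 - s2*a|) * (c1*c2 - s1*s2) := by rw [habseq]
    _ = Real.sqrt (1 - cv^2) * ((c1*c2 - s1*s2) * |c2*b2 - s2*a|) := by ring
    _ ≤ Real.sqrt (1 - cv^2)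
        * ((1 + Real.sqrt 2) * Real.cosh R' * ((s1*c2 + c1*s2) * |c1*c2*τ - s1*s2|)) :=
        mul_le_mul_of_nonneg_left hkey2 (Real.sqrt_nonneg _)
    _ = (1 + Real.sqrt 2) * Real.cosh R' * Real.tan (w₁ + w₂) * Real.sqrt (1 - cv^2)
        * (|c1*c2*τ - s1*s2| * (c1*c2 - s1*s2)) := by
        rw [← httc]; ring


end AdSPaper
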